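/- Let $P=(p_1,\dots,p_n),Q,R\in[1,\infty)^n$ with $1/p_j+1/q_j=1/r_j+1$ for each $j$. If $f\in L^P(\mathbb{R}^n)$ and $g\in L^Q(\mathbb{R}^n)$ are real-valued (not necessarily nonnegative), then for almost every $x\in\mathbb{R}^n$ the integral $f*g(x)=\int_{\mathbb{R}^n}f(x-t)g(t)\,dt$ converges absolutely, and $\|f*g\|_{L^R}\le\|f\|_{L^P}\|g\|_{L^Q}$. -/

import Mathlib

open MeasureTheory ENNReal Filter Topology

/-- The iterated mixed Lebesgue norm on `ℝ^n`: integrate first in the coordinate `t₁`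
with exponent `P 0`, then in `t₂` with exponent `P 1`, and so on. -/
noncomputable def mixedLNorm : (n : ℕ) → (Fin n → ℝ) → ((Fin n → ℝ) → ℝ≥0∞) → ℝ≥0∞
  | 0, _, h => h (fun i => i.elim0)
  | n + 1, P, h =>
      mixedLNorm n (fun i => P i.succ)
        (fun v => (∫⁻ t : ℝ, h (Fin.cons t v) ^ P 0) ^ (1 / P 0))

/-!
For nonnegative functions the inequality is proved by induction on the dimension. Peel off the
first coordinate: Minkowski's integral inequality moves the `L^{r₁}` norm in `t₁` inside the
integral over the remaining coordinates, and there the one-dimensional Young inequality bounds it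
by the convolution on `ℝ^{n-1}` of the `L^{p₁}`- and `L^{q₁}`-norms in `t₁` of the two factors, to
which the induction hypothesis applies. Young's inequality itself follows from Hölder's inequality
with three factors, writing `u v = (u^p v^q)^{1/r} (u^p)^{1/p - 1/r} (v^q)^{1/q - 1/r}`.

For signed `f`, `g` one applies this to `|f|`, `|g|`: the bound for `|f| * |g|` is finite, so
`|f| * |g| < ∞` almost everywhere, and it dominates `|f * g|`.
-/

namespace ENNReal

lemma rpow_mul_rpow_sub (w : ℝ≥0∞) {a b : ℝ} (ha : 0 ≤ a) (hab : a ≤ b) :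
    w ^ a * w ^ (b - a) = w ^ b := by
  rw [← rpow_add_of_nonneg _ _ ha (sub_nonneg.2 hab), add_sub_cancel]

lemma mul_rpow_mul_rpow_sub_mul_rpow_sub (x y : ℝ≥0∞) {a b c : ℝ} (ha : 0 ≤ a) (hab : a ≤ b)
    (hac : a ≤ c) : (x * y) ^ a * x ^ (b - a) * y ^ (c - a) = x ^ b * y ^ c := by
  rw [mul_rpow_of_nonneg _ _ ha, mul_right_comm (x ^ a), rpow_mul_rpow_sub x ha hab, mul_assoc,
    rpow_mul_rpow_sub y ha hac]

end ENNReal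

lemma one_div_le_of_young_exponents {p q r : ℝ} (hq : 1 ≤ q) (hpqr : 1 / p + 1 / q = 1 / r + 1) :
    1 / r ≤ 1 / p := by
  linarith [(div_le_one (by linarith : (0 : ℝ) < q)).2 hq]

section Young

variable {α : Type*} [MeasurableSpace α] {μ : Measure α}

lemma lintegral_mul_le_of_young_exponents {p q r : ℝ} (hp : 1 ≤ p) (hq : 1 ≤ q) (hr : 0 < r)
    (hpqr : 1 / p + 1 / q = 1 / r + 1) {u v : α → ℝ≥0∞} (hu : AEMeasurable u μ)
    (hv : AEMeasurable v μ) :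
    ∫⁻ t, u t * v t ∂μ ≤ (∫⁻ t, u t ^ p * v t ^ q ∂μ) ^ (1 / r)
      * (∫⁻ t, u t ^ p ∂μ) ^ (1 / p - 1 / r) * (∫⁻ t, v t ^ q ∂μ) ^ (1 / q - 1 / r) := by
  have hrp := one_div_le_of_young_exponents hq hpqr
  have hrq := one_div_le_of_young_exponents hp ((add_comm _ _).trans hpqr)
  have hr' : 0 ≤ 1 / r := by positivity
  have holder := ENNReal.lintegral_prod_norm_pow_le (μ := μ) Finset.univ
    (f := ![fun t => u t ^ p * v t ^ q, fun t => u t ^ p, fun t => v t ^ q])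
    (p := ![1 / r, 1 / p - 1 / r, 1 / q - 1 / r])
    (fun i _ => by
      fin_cases i
      exacts [((hu.pow_const p).mul (hv.pow_const q)), hu.pow_const p, hv.pow_const q])
    (by simp only [Fin.sum_univ_three, Matrix.cons_val_zero, Matrix.cons_val_one,
      Matrix.cons_val_two, Matrix.head_cons, Matrix.tail_cons]; linarith)
    (fun i _ => by
      fin_cases i <;> simp only [Fin.zero_eta, Fin.mk_one, Fin.reduceFinMk, Matrix.cons_val_zero,
        Matrix.cons_val_one, Matrix.cons_val_two, Matrix.head_cons, Matrix.tail_cons] <;> linarith)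
  simp only [Fin.prod_univ_three, Matrix.cons_val_zero, Matrix.cons_val_one,
    Matrix.cons_val_two, Matrix.head_cons, Matrix.tail_cons] at holder
  refine le_of_eq_of_le (lintegral_congr fun t => ?_) holder
  rw [ENNReal.mul_rpow_mul_rpow_sub_mul_rpow_sub _ _ hr' hrp hrq, ← rpow_mul, ← rpow_mul,
    mul_one_div_cancel (by linarith), mul_one_div_cancel (by linarith), rpow_one, rpow_one]

variable {G : Type*} [AddCommGroup G] [MeasurableSpace G] [MeasurableAdd₂ G] [MeasurableNeg G]
  {ν : Measure G} [SigmaFinite ν] [ν.IsAddLeftInvariant] [ν.IsNegInvariant]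

theorem young_conv_lintegral {p q r : ℝ} (hp : 1 ≤ p) (hq : 1 ≤ q) (hr : 0 < r)
    (hpqr : 1 / p + 1 / q = 1 / r + 1) {H K : G → ℝ≥0∞} (hH : Measurable H) (hK : Measurable K) :
    (∫⁻ x, (∫⁻ t, H (x - t) * K t ∂ν) ^ r ∂ν) ^ (1 / r)
      ≤ (∫⁻ x, H x ^ p ∂ν) ^ (1 / p) * (∫⁻ x, K x ^ q ∂ν) ^ (1 / q) := by
  set A := ∫⁻ x, H x ^ p ∂ν
  set B := ∫⁻ x, K x ^ q ∂ν
  set C := A ^ (1 / p - 1 / r) * B ^ (1 / q - 1 / r)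
  set Φ : G → ℝ≥0∞ := fun x => ∫⁻ t, H (x - t) ^ p * K t ^ q ∂ν
  have hrp := one_div_le_of_young_exponents hq hpqr
  have hrq := one_div_le_of_young_exponents hp ((add_comm _ _).trans hpqr)
  have hΦ_meas : Measurable Φ :=
    Measurable.lintegral_prod_right' (f := fun z : G × G => H (z.1 - z.2) ^ p * K z.2 ^ q)
      (by fun_prop)
  have hΦ_int : ∫⁻ x, Φ x ∂ν = A * B := by
    have hinner : ∀ t, ∫⁻ x, H (x - t) ^ p * K t ^ q ∂ν = A * K t ^ q := fun t => by
      rw [lintegral_mul_const _ (by fun_prop : Measurable fun x => H (x - t) ^ p),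
        (measurePreserving_sub_right ν t).lintegral_comp (hH.pow_const p)]
    rw [lintegral_lintegral_swap (by fun_prop)]
    simp_rw [hinner]
    rw [lintegral_const_mul _ (hK.pow_const q)]
  have hpointwise : ∀ x, ∫⁻ t, H (x - t) * K t ∂ν ≤ Φ x ^ (1 / r) * C := fun x => by
    have := lintegral_mul_le_of_young_exponents (μ := ν) hp hq hr hpqr
      (u := fun t => H (x - t)) (by fun_prop) hK.aemeasurable
    rwa [(Measure.measurePreserving_sub_left ν x).lintegral_comp (hH.pow_const p),
      mul_assoc] at this
  calc (∫⁻ x, (∫⁻ t, H (x - t) * K t ∂ν) ^ r ∂ν) ^ (1 / r)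
      ≤ (∫⁻ x, Φ x * C ^ r ∂ν) ^ (1 / r) := by
        gcongr with x
        calc (∫⁻ t, H (x - t) * K t ∂ν) ^ r ≤ (Φ x ^ (1 / r) * C) ^ r := by
              gcongr; exact hpointwise x
          _ = Φ x * C ^ r := by
            rw [mul_rpow_of_nonneg _ _ hr.le, ← rpow_mul, one_div_mul_cancel hr.ne', rpow_one]
    _ = (A * B) ^ (1 / r) * C := by
        rw [lintegral_mul_const _ hΦ_meas, hΦ_int, mul_rpow_of_nonneg _ _ (by positivity),
          ← rpow_mul, mul_one_div_cancel hr.ne', rpow_one]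
    _ = A ^ (1 / p) * B ^ (1 / q) := by
        rw [← mul_assoc]
        exact ENNReal.mul_rpow_mul_rpow_sub_mul_rpow_sub _ _ (by positivity) hrp hrq

end Young

section Minkowski

variable {α β : Type*} [MeasurableSpace α] [MeasurableSpace β] {μ : Measure α} {ν : Measure β}
  [SFinite ν] {p : ℝ} {f : α → β → ℝ≥0∞}

lemma lintegral_rpow_le_of_le_lintegral [SFinite μ] (hp : 1 < p)
    (hf : Measurable (Function.uncurry f))
    {G : α → ℝ≥0∞} (hG : Measurable G) (hGf : ∀ x, G x ≤ ∫⁻ y, f x y ∂ν)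
    (hG_fin : ∫⁻ x, G x ^ p ∂μ ≠ ∞) :
    ∫⁻ x, G x ^ p ∂μ ≤ (∫⁻ y, (∫⁻ x, f x y ^ p ∂μ) ^ (1 / p) ∂ν) ^ p := by
  set M := ∫⁻ x, G x ^ p ∂μ
  set N := ∫⁻ y, (∫⁻ x, f x y ^ p ∂μ) ^ (1 / p) ∂ν
  set q := Real.conjExponent p
  have hpq : p.HolderConjugate q := .conjExponent hp
  have hM : M ≤ N * M ^ (1 / q) := calc
    M = ∫⁻ x, G x * G x ^ (p - 1) ∂μ := lintegral_congr fun x => by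
          conv_lhs => rw [← add_sub_cancel 1 p]
          rw [rpow_add_of_nonneg _ _ zero_le_one (by linarith), rpow_one]
    _ ≤ ∫⁻ x, (∫⁻ y, f x y ∂ν) * G x ^ (p - 1) ∂μ := by gcongr with x; exact hGf x
    _ = ∫⁻ x, ∫⁻ y, f x y * G x ^ (p - 1) ∂ν ∂μ :=
          lintegral_congr fun x => (lintegral_mul_const _ hf.of_uncurry_left).symm
    _ = ∫⁻ y, ∫⁻ x, f x y * G x ^ (p - 1) ∂μ ∂ν := lintegral_lintegral_swap (by fun_prop)
    _ ≤ ∫⁻ y, (∫⁻ x, f x y ^ p ∂μ) ^ (1 / p) * M ^ (1 / q) ∂ν := by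
          gcongr with y
          exact ENNReal.lintegral_mul_rpow_le_lintegral_rpow_mul_lintegral_rpow hpq
            hf.of_uncurry_right.aemeasurable hG.aemeasurable
    _ = N * M ^ (1 / q) := lintegral_mul_const _ (by fun_prop)
  rcases eq_or_ne M 0 with hM0 | hM0
  · rw [hM0]; exact zero_le
  have hq0 : 0 < 1 / q := one_div_pos.2 hpq.symm.pos
  rw [← rpow_inv_le_iff (by linarith), ← one_div,
    ← ENNReal.mul_le_mul_iff_left (c := M ^ (1 / q)) (rpow_pos (pos_iff_ne_zero.2 hM0) hG_fin).ne'
      (rpow_ne_top_of_nonneg hq0.le hG_fin),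
    ← rpow_add_of_nonneg _ _ (by positivity) hq0.le, hpq.one_div_add_one_div, div_one, rpow_one]
  exact hM

theorem lintegral_lintegral_rpow_le [SigmaFinite μ] (hp : 1 ≤ p)
    (hf : Measurable (Function.uncurry f)) :
    (∫⁻ x, (∫⁻ y, f x y ∂ν) ^ p ∂μ) ^ (1 / p) ≤ ∫⁻ y, (∫⁻ x, f x y ^ p ∂μ) ^ (1 / p) ∂ν := by
  rcases hp.eq_or_lt with rfl | hp
  · simpa using (lintegral_lintegral_swap hf.aemeasurable).le
  set F : α → ℝ≥0∞ := fun x => ∫⁻ y, f x y ∂ν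
  have hF : Measurable F := hf.lintegral_prod_right'
  -- The previous lemma cancels a power of `∫⁻ G ^ p`, so it only applies to truncations of `F`
  -- with finite `L^p` norm; Fatou's lemma passes the bound on to `F`.
  set T : ℕ → α → ℝ≥0∞ := fun n => (spanningSets μ n).indicator fun x => min (F x) n
  have hT : ∀ n, Measurable (T n) := fun n =>
    (hF.min measurable_const).indicator (measurableSet_spanningSets μ n)
  have hT_fin : ∀ n, ∫⁻ x, T n x ^ p ∂μ ≠ ∞ := fun n => by
    have hle : ∀ x, T n x ^ p ≤ (spanningSets μ n).indicator (fun _ => (n : ℝ≥0∞) ^ p) x := by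
      intro x
      by_cases hx : x ∈ spanningSets μ n
      · simp only [T, Set.indicator_of_mem hx]
        exact rpow_le_rpow (min_le_right _ _) (by linarith)
      · simp [T, Set.indicator_of_notMem hx, zero_rpow_of_pos (by linarith : 0 < p)]
    refine ne_top_of_le_ne_top ?_ (lintegral_mono hle)
    rw [lintegral_indicator_const (measurableSet_spanningSets μ n)]
    exact mul_ne_top (by finiteness) (measure_spanningSets_lt_top μ n).ne
  have hT_lim : ∀ x, Tendsto (fun n => T n x ^ p) atTop (𝓝 (F x ^ p)) := fun x => by
    refine Tendsto.ennrpow_const p ?_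
    have hmin : Tendsto (fun n : ℕ => min (F x) n) atTop (𝓝 (F x)) := by
      simpa using tendsto_const_nhds.min ENNReal.tendsto_nat_nhds_top
    refine hmin.congr' ?_
    filter_upwards [eventually_mem_spanningSets μ x] with n hn
    simp only [T, Set.indicator_of_mem hn]
  rw [one_div, rpow_inv_le_iff (by linarith), ← one_div]
  calc ∫⁻ x, F x ^ p ∂μ = ∫⁻ x, liminf (fun n => T n x ^ p) atTop ∂μ :=
        lintegral_congr fun x => (hT_lim x).liminf_eq.symm
    _ ≤ liminf (fun n => ∫⁻ x, T n x ^ p ∂μ) atTop :=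
        lintegral_liminf_le fun n => (hT n).pow_const p
    _ ≤ _ := liminf_le_of_frequently_le' (Frequently.of_forall fun n =>
        lintegral_rpow_le_of_le_lintegral (μ := μ) (ν := ν) hp hf (hT n)
          (fun x => (Set.indicator_le_self _ _ x).trans (min_le_left _ _)) (hT_fin n))

end Minkowski

section FinCons

variable {α γ : Type*} [MeasurableSpace α] [MeasurableSpace γ] {μ : Measure α} {n : ℕ}

@[fun_prop]
lemma Measurable.finCons {f : γ → α} {g : γ → Fin n → α} (hf : Measurable f)
    (hg : Measurable g) : Measurable fun x => (Fin.cons (f x) (g x) : Fin (n + 1) → α) := by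
  refine measurable_pi_iff.2 fun i => Fin.cases ?_ (fun j => ?_) i
  · simpa using hf
  · simpa using measurable_pi_iff.1 hg j

lemma lintegral_pi_fin_succ [SigmaFinite μ] {φ : (Fin (n + 1) → α) → ℝ≥0∞} (hφ : Measurable φ) :
    ∫⁻ x, φ x ∂Measure.pi (fun _ => μ)
      = ∫⁻ v, ∫⁻ t, φ (Fin.cons t v) ∂μ ∂Measure.pi (fun _ => μ) := by
  rw [← ((measurePreserving_piFinSuccAbove (fun _ => μ) 0).symm).lintegral_comp hφ,
    lintegral_prod_symm _ (by fun_prop)]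
  simp only [MeasurableEquiv.piFinSuccAbove_symm_apply, Fin.insertNthEquiv_zero]
  rfl

lemma ae_pi_of_ae_ae_finCons [SigmaFinite μ] {s : Set (Fin (n + 1) → α)} (hs : MeasurableSet s)
    (h : ∀ᵐ v ∂Measure.pi (fun _ => μ), ∀ᵐ t ∂μ, Fin.cons t v ∈ s) :
    ∀ᵐ x ∂Measure.pi (fun _ => μ), x ∈ s := by
  change Measure.pi (fun _ => μ) sᶜ = 0
  rw [← lintegral_indicator_one hs.compl, lintegral_pi_fin_succ (measurable_one.indicator hs.compl)]
  refine (lintegral_congr_ae ?_).trans lintegral_zero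
  filter_upwards [h] with v hv
  refine (lintegral_congr_ae ?_).trans lintegral_zero
  filter_upwards [hv] with t ht
  simp [ht]

end FinCons

noncomputable def sliceNorm {n : ℕ} (p : ℝ) (h : (Fin (n + 1) → ℝ) → ℝ≥0∞) (v : Fin n → ℝ) :
    ℝ≥0∞ :=
  (∫⁻ t, h (Fin.cons t v) ^ p) ^ (1 / p)

lemma mixedLNorm_succ {n : ℕ} (P : Fin (n + 1) → ℝ) (h : (Fin (n + 1) → ℝ) → ℝ≥0∞) :
    mixedLNorm (n + 1) P h = mixedLNorm n (fun i => P i.succ) (sliceNorm (P 0) h) := rfl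

lemma Measurable.sliceNorm {n : ℕ} {p : ℝ} {h : (Fin (n + 1) → ℝ) → ℝ≥0∞} (hh : Measurable h) :
    Measurable (sliceNorm p h) :=
  (Measurable.lintegral_prod_left' (f := fun z : ℝ × (Fin n → ℝ) => h (Fin.cons z.1 z.2) ^ p)
    (by fun_prop)).pow_const _

lemma mixedLNorm_mono {n : ℕ} {P : Fin n → ℝ} (hP : ∀ j, 0 ≤ P j)
    {h k : (Fin n → ℝ) → ℝ≥0∞} (hhk : ∀ x, h x ≤ k x) :
    mixedLNorm n P h ≤ mixedLNorm n P k := by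
  induction n with
  | zero => exact hhk _
  | succ n ih =>
    rw [mixedLNorm_succ, mixedLNorm_succ]
    refine ih (fun j => hP j.succ) fun v => ?_
    have hP0 := hP 0
    simp only [sliceNorm]
    gcongr with t
    exact hhk _

lemma mixedLNorm_ae_lt_top {n : ℕ} {P : Fin n → ℝ} (hP : ∀ j, 0 < P j)
    {h : (Fin n → ℝ) → ℝ≥0∞} (hh : Measurable h) (hfin : mixedLNorm n P h ≠ ∞) :
    ∀ᵐ x, h x < ∞ := by
  induction n with
  | zero =>
    refine .of_forall fun x => ?_
    rw [Subsingleton.elim x fun i => i.elim0]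
    exact hfin.lt_top
  | succ n ih =>
    have hP0 := hP 0
    rw [mixedLNorm_succ] at hfin
    refine ae_pi_of_ae_ae_finCons (hh measurableSet_Iio) ?_
    filter_upwards [ih (fun j => hP j.succ) hh.sliceNorm hfin] with v hv
    rw [sliceNorm, rpow_lt_top_iff_of_pos (by positivity)] at hv
    filter_upwards [ae_lt_top' (by fun_prop) hv.ne] with t ht
    exact (rpow_lt_top_iff_of_pos hP0).1 ht

lemma sliceNorm_conv_le {n : ℕ} {p q r : ℝ} (hp : 1 ≤ p) (hq : 1 ≤ q) (hr : 1 ≤ r)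
    (hpqr : 1 / p + 1 / q = 1 / r + 1) {h k : (Fin (n + 1) → ℝ) → ℝ≥0∞} (hh : Measurable h)
    (hk : Measurable k) (v : Fin n → ℝ) :
    sliceNorm r (fun x => ∫⁻ t, h (x - t) * k t) v
      ≤ ∫⁻ w, sliceNorm p h (v - w) * sliceNorm q k w := by
  set C : ℝ → (Fin n → ℝ) → ℝ≥0∞ :=
    fun s w => ∫⁻ b, h (Fin.cons (s - b) (v - w)) * k (Fin.cons b w)
  have hC : Measurable (Function.uncurry C) :=
    Measurable.lintegral_prod_right' (f := fun z : (ℝ × (Fin n → ℝ)) × ℝ =>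
      h (Fin.cons (z.1.1 - z.2) (v - z.1.2)) * k (Fin.cons z.2 z.1.2)) (by fun_prop)
  have hsplit : ∀ s, ∫⁻ t, h (Fin.cons s v - t) * k t = ∫⁻ w, C s w := fun s => by
    rw [volume_pi, lintegral_pi_fin_succ (by fun_prop)]
    refine lintegral_congr fun w => lintegral_congr fun b => ?_
    rw [show (Fin.cons s v - Fin.cons b w : Fin (n + 1) → ℝ) = Fin.cons (s - b) (v - w) from
      Matrix.cons_sub_cons s v b w]
  calc sliceNorm r (fun x => ∫⁻ t, h (x - t) * k t) v
      = (∫⁻ s, (∫⁻ w, C s w) ^ r) ^ (1 / r) := by simp_rw [sliceNorm, hsplit]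
    _ ≤ ∫⁻ w, (∫⁻ s, C s w ^ r) ^ (1 / r) := lintegral_lintegral_rpow_le hr hC
    _ ≤ ∫⁻ w, sliceNorm p h (v - w) * sliceNorm q k w := by
        gcongr with w
        exact young_conv_lintegral hp hq (by linarith) hpqr (by fun_prop) (by fun_prop)

theorem mixedLNorm_conv_le {n : ℕ} {P Q R : Fin n → ℝ} (hP : ∀ j, 1 ≤ P j) (hQ : ∀ j, 1 ≤ Q j)
    (hR : ∀ j, 1 ≤ R j) (hPQR : ∀ j, 1 / P j + 1 / Q j = 1 / R j + 1)
    {h k : (Fin n → ℝ) → ℝ≥0∞} (hh : Measurable h) (hk : Measurable k) :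
    mixedLNorm n R (fun x => ∫⁻ t, h (x - t) * k t) ≤ mixedLNorm n P h * mixedLNorm n Q k := by
  induction n with
  | zero =>
    rw [mixedLNorm, mixedLNorm, mixedLNorm, volume_pi,
      Measure.pi_of_empty (x := fun i => i.elim0), lintegral_dirac, sub_self,
      Subsingleton.elim (0 : Fin 0 → ℝ) fun i => i.elim0]
  | succ n ih =>
    calc mixedLNorm (n + 1) R (fun x => ∫⁻ t, h (x - t) * k t)
        = mixedLNorm n (fun i => R i.succ) (sliceNorm (R 0) fun x => ∫⁻ t, h (x - t) * k t) :=
          mixedLNorm_succ R _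
      _ ≤ mixedLNorm n (fun i => R i.succ)
            (fun v => ∫⁻ w, sliceNorm (P 0) h (v - w) * sliceNorm (Q 0) k w) :=
          mixedLNorm_mono (fun j => by linarith [hR j.succ])
            (sliceNorm_conv_le (hP 0) (hQ 0) (hR 0) (hPQR 0) hh hk)
      _ ≤ mixedLNorm n (fun i => P i.succ) (sliceNorm (P 0) h)
            * mixedLNorm n (fun i => Q i.succ) (sliceNorm (Q 0) k) :=
          ih (fun j => hP j.succ) (fun j => hQ j.succ) (fun j => hR j.succ)
            (fun j => hPQR j.succ) hh.sliceNorm hk.sliceNorm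
      _ = mixedLNorm (n + 1) P h * mixedLNorm (n + 1) Q k := by
          rw [mixedLNorm_succ P, mixedLNorm_succ Q]

/-- Mixed-norm Young's inequality for signed functions: if `f ∈ L^P` and `g ∈ L^Q`
then the convolution `f * g` converges absolutely almost everywhere and satisfies
`‖f * g‖_{L^R} ≤ ‖f‖_{L^P} ‖g‖_{L^Q}`. -/
theorem mixed_norm_young_signed
    (n : ℕ) (P Q R : Fin n → ℝ)
    (hP : ∀ j, 1 ≤ P j) (hQ : ∀ j, 1 ≤ Q j) (hR : ∀ j, 1 ≤ R j)
    (hPQR : ∀ j, 1 / P j + 1 / Q j = 1 / R j + 1)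
    (f g : (Fin n → ℝ) → ℝ) (hf : Measurable f) (hg : Measurable g)
    (hfP : mixedLNorm n P (fun x => ((‖f x‖₊ : ℝ≥0∞))) ≠ ∞)
    (hgQ : mixedLNorm n Q (fun x => ((‖g x‖₊ : ℝ≥0∞))) ≠ ∞) :
    (∀ᵐ x : Fin n → ℝ, Integrable (fun t => f (x - t) * g t)) ∧
      mixedLNorm n R (fun x => ((‖∫ t, f (x - t) * g t‖₊ : ℝ≥0∞)))
        ≤ mixedLNorm n P (fun x => ((‖f x‖₊ : ℝ≥0∞))) * mixedLNorm n Q (fun x => ((‖g x‖₊ : ℝ≥0∞))) := by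
  have hyoung := mixedLNorm_conv_le hP hQ hR hPQR hf.enorm hg.enorm
  have hfin : ∀ᵐ x, ∫⁻ t, ‖f (x - t)‖ₑ * ‖g t‖ₑ < ∞ :=
    mixedLNorm_ae_lt_top (fun j => by linarith [hR j])
      (Measurable.lintegral_prod_right' (f := fun z : (Fin n → ℝ) × (Fin n → ℝ) =>
        ‖f (z.1 - z.2)‖ₑ * ‖g z.2‖ₑ) (by fun_prop))
      (ne_top_of_le_ne_top (mul_ne_top hfP hgQ) hyoung)
  refine ⟨?_, (mixedLNorm_mono (fun j => by linarith [hR j]) fun x => ?_).trans hyoung⟩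
  · filter_upwards [hfin] with x hx
    exact ⟨by fun_prop, by simpa [HasFiniteIntegral, enorm_mul] using hx⟩
  · exact (enorm_integral_le_lintegral_enorm _).trans_eq (by simp [enorm_mul])
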